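/- Suppose γ has cofinality greater than ω₁, ⟨𝒞_α : α < γ⟩ is a potential □(γ, ω)-sequence in which each 𝒞_α is enumerated in order type at most ω, and the set of threads is nonempty and countable. Then there exist a limit ordinal α < γ, a club C ∈ 𝒞_α, and a unique thread E with E ∩ α = C. -/

import Mathlib

open Ordinal Set

/-- `C` is club (closed and unbounded) in `γ`. -/
def IsClubIn (C : Set Ordinal) (γ : Ordinal) : Prop :=
  C ⊆ Set.Iio γ ∧ (∀ δ < γ, ∃ β ∈ C, δ ≤ β) ∧
    ∀ δ < γ, Order.IsSuccLimit δ → (∀ ε < δ, ∃ β ∈ C, ε ≤ β ∧ β < δ) → δ ∈ C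

/-- `β` is a limit point of `C`. -/
def IsLimitPt (C : Set Ordinal) (β : Ordinal) : Prop :=
  Order.IsSuccLimit β ∧ ∀ ε < β, ∃ x ∈ C, ε ≤ x ∧ x < β

/-- A potential `□(γ)`-sequence: a coherent sequence of clubs. -/
def IsCoherentSeq (C : Ordinal → Set Ordinal) (γ : Ordinal) : Prop :=
  ∀ α < γ, Order.IsSuccLimit α →
    (IsClubIn (C α) α ∧ ∀ β < α, IsLimitPt (C α) β → C β = C α ∩ Set.Iio β)

/-- A thread through a coherent sequence. -/
def IsThread (C : Ordinal → Set Ordinal) (γ : Ordinal) (E : Set Ordinal) : Prop :=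
  IsClubIn E γ ∧ ∀ α < γ, IsLimitPt E α → C α = E ∩ Set.Iio α

/-- A potential `□(γ, δ)`-sequence. -/
def IsPotSeq (𝒞 : Ordinal.{0} → Set (Set Ordinal.{0})) (γ : Ordinal.{0}) (δ : Cardinal.{0}) : Prop :=
  ∀ α < γ, Order.IsSuccLimit α →
    ((𝒞 α).Nonempty ∧ Cardinal.mk (𝒞 α) ≤ Cardinal.lift.{1, 0} δ ∧
      (∀ C ∈ 𝒞 α, IsClubIn C α) ∧
      ∀ C ∈ 𝒞 α, ∀ β < α, IsLimitPt C β → C ∩ Set.Iio β ∈ 𝒞 β)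

/-- A thread through a `□(γ, δ)`-style sequence. -/
def IsThreadOf (𝒞 : Ordinal → Set (Set Ordinal)) (γ : Ordinal) (E : Set Ordinal) : Prop :=
  IsClubIn E γ ∧ ∀ α < γ, IsLimitPt E α → E ∩ Set.Iio α ∈ 𝒞 α

/-- Order type of a set of ordinals. -/
noncomputable def otype (C : Set Ordinal) : Ordinal :=
  Ordinal.type ((· < ·) : C → C → Prop)

/-- `f` is an `R`-chain of length `δ`. -/
def RChain {X : Type*} (R : X → X → Prop) (δ : Ordinal) (f : Ordinal → X) : Prop :=
  ∀ a b : Ordinal, a < b → b < δ → R (f a) (f b)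

/-- `R` is `η`-closed: every `R`-chain of length `< η` has an upper bound. -/
def IsEtaClosed {X : Type*} (R : X → X → Prop) (η : Cardinal) : Prop :=
  ∀ δ : Ordinal, δ < η.ord → ∀ f : Ordinal → X, RChain R δ f →
    ∃ r : X, ∀ a < δ, R (f a) r

/-- `DC_κ` for relations on `X`. -/
def DCOn (κ : Cardinal) (X : Type*) : Prop :=
  ∀ η : Cardinal, η ≤ κ → ∀ R : X → X → Prop, IsEtaClosed R η →
    ∃ f : Ordinal → X, RChain R κ.ord f

/-!
Since `cof γ > ω`, the supremum of countably many ordinals below `γ` stays below `γ`. Hence one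
`W < γ` exceeds the first point of disagreement of every pair of distinct threads, and an
`ω`-chain above `W`, interleaved with points of each of the countably many threads, has a
supremum `α < γ` that is a limit point of every thread. Restricting threads to `α` is then
injective, so for any thread `E₀` the club `E₀ ∩ α ∈ 𝒞 α` has `E₀` as its only extension.
-/

open Cardinal Order
open scoped symmDiff

universe u v

theorem iSup_lt_of_countable {ι : Type v} [Countable ι] {f : ι → Ordinal.{u}} {γ : Ordinal.{u}}
    (hγ : ℵ₀ < γ.cof) (hf : ∀ i, f i < γ) : ⨆ i, f i < γ := by
  refine Ordinal.lift_iSup_lt_of_lt_cof ?_ hf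
  rw [← Ordinal.lift_cof]
  exact (lift_le_aleph0.2 mk_le_aleph0).trans_lt (aleph0_lt_lift.2 hγ)

theorem exists_lt_forall_injOn_inter_Iio {γ : Ordinal.{u}} (hγ : ℵ₀ < γ.cof)
    {S : Set (Set Ordinal.{u})} (hS : S.Countable) (hSγ : ∀ A ∈ S, A ⊆ Iio γ) :
    ∃ W < γ, ∀ α, W < α → InjOn (· ∩ Iio α) S := by
  have : Countable (S × S) := by have := hS.to_subtype; infer_instance
  -- `sInf (A ∆ B)` is the first point where `A` and `B` disagree, and `0` when `A = B`.
  have hlt : ∀ p : S × S, sInf ((p.1 : Set Ordinal) ∆ p.2) < γ := by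
    rintro ⟨⟨A, hA⟩, ⟨B, hB⟩⟩
    rcases (A ∆ B).eq_empty_or_nonempty with h | h
    · rw [h, Ordinal.sInf_empty]
      exact (Ordinal.one_lt_cof_iff.1 (one_lt_aleph0.trans hγ)).bot_lt
    · rcases csInf_mem h with h' | h'
      · exact hSγ A hA h'.1
      · exact hSγ B hB h'.1
  refine ⟨_, iSup_lt_of_countable hγ hlt, fun α hα A hA B hB hAB => ?_⟩
  by_contra hne
  have hmin : sInf (A ∆ B) < α :=
    (le_ciSup ⟨γ, forall_mem_range.2 fun p => (hlt p).le⟩ (⟨⟨A, hA⟩, ⟨B, hB⟩⟩ : S × S)).trans_lt hα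
  have hAB' : A ∩ Iio α = B ∩ Iio α := hAB
  rcases csInf_mem (symmDiff_nonempty.2 hne) with ⟨hxA, hxB⟩ | ⟨hxB, hxA⟩
  · exact hxB (hAB' ▸ ⟨hxA, hmin⟩ : _ ∈ B ∩ Iio α).1
  · exact hxA (hAB'.symm ▸ ⟨hxB, hmin⟩ : _ ∈ A ∩ Iio α).1

theorem exists_gt_forall_exists_mem_Ioc {γ : Ordinal.{u}} (hγ : ℵ₀ < γ.cof)
    {S : Set (Set Ordinal.{u})} (hS : S.Countable)
    (hcof : ∀ A ∈ S, ∀ δ < γ, ∃ β ∈ A, δ ≤ β ∧ β < γ) {δ : Ordinal.{u}} (hδ : δ < γ) :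
    ∃ δ' < γ, δ < δ' ∧ ∀ A ∈ S, ∃ β ∈ A, δ < β ∧ β ≤ δ' := by
  have : Countable S := hS.to_subtype
  have hsucc : succ δ < γ := (Ordinal.one_lt_cof_iff.1 (one_lt_aleph0.trans hγ)).succ_lt hδ
  choose g hgA hg hgγ using fun A : S => hcof A A.2 (succ δ) hsucc
  have hbdd : BddAbove (range g) := ⟨γ, forall_mem_range.2 fun A => (hgγ A).le⟩
  refine ⟨succ δ ⊔ ⨆ A, g A, max_lt hsucc (iSup_lt_of_countable hγ hgγ),
    (lt_succ δ).trans_le le_sup_left, fun A hA => ⟨g ⟨A, hA⟩, hgA ⟨A, hA⟩, ?_, ?_⟩⟩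
  · exact (lt_succ δ).trans_le (hg _)
  · exact (le_ciSup hbdd ⟨A, hA⟩).trans le_sup_right

theorem lt_iSup_of_strictMono {d : ℕ → Ordinal.{u}} (hd : StrictMono d) (n : ℕ) :
    d n < ⨆ n, d n :=
  (hd n.lt_succ_self).trans_le (Ordinal.le_iSup d _)

theorem isSuccLimit_iSup_of_strictMono {d : ℕ → Ordinal.{u}} (hd : StrictMono d) :
    IsSuccLimit (⨆ n, d n) := by
  refine ⟨not_isMin_of_lt (lt_iSup_of_strictMono hd 0), isSuccPrelimit_iff_succ_lt.2 fun a ha => ?_⟩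
  obtain ⟨n, hn⟩ := Ordinal.lt_iSup_iff.1 ha
  exact (succ_le_of_lt hn).trans_lt (lt_iSup_of_strictMono hd n)

theorem isLimitPt_iSup_of_strictMono {d : ℕ → Ordinal.{u}} (hd : StrictMono d)
    {A : Set Ordinal.{u}} (hA : ∀ n, ∃ β ∈ A, d n < β ∧ β ≤ d (n + 1)) :
    IsLimitPt A (⨆ n, d n) := by
  refine ⟨isSuccLimit_iSup_of_strictMono hd, fun ε hε => ?_⟩
  obtain ⟨n, hn⟩ := Ordinal.lt_iSup_iff.1 hε
  obtain ⟨β, hβA, hnβ, hβ⟩ := hA n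
  exact ⟨β, hβA, (hn.trans hnβ).le, hβ.trans_lt (lt_iSup_of_strictMono hd _)⟩

theorem exists_gt_forall_isLimitPt {γ : Ordinal.{u}} (hγ : ℵ₀ < γ.cof)
    {S : Set (Set Ordinal.{u})} (hS : S.Countable)
    (hcof : ∀ A ∈ S, ∀ δ < γ, ∃ β ∈ A, δ ≤ β ∧ β < γ) {δ : Ordinal.{u}} (hδ : δ < γ) :
    ∃ α < γ, δ < α ∧ ∀ A ∈ S, IsLimitPt A α := by
  choose! next hnextγ hlt_next hnext using
    fun ε (hε : ε < γ) => exists_gt_forall_exists_mem_Ioc hγ hS hcof hε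
  let d : ℕ → Ordinal.{u} := fun n => next^[n] δ
  have hd_succ : ∀ n, d (n + 1) = next (d n) := fun n => Function.iterate_succ_apply' next n δ
  have hdγ : ∀ n, d n < γ := by
    intro n
    induction n with
    | zero => exact hδ
    | succ n ih => exact hd_succ n ▸ hnextγ _ ih
  have hd : StrictMono d := strictMono_nat_of_lt_succ fun n => hd_succ n ▸ hlt_next _ (hdγ n)
  refine ⟨⨆ n, d n, iSup_lt_of_countable hγ hdγ, lt_iSup_of_strictMono hd 0,
    fun A hA => isLimitPt_iSup_of_strictMono hd fun n => ?_⟩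
  rw [hd_succ]
  exact hnext _ (hdγ n) A hA

theorem stmt13_general (γ : Ordinal) (hγ : Cardinal.aleph 1 < γ.cof)
    (𝒞 : Ordinal → Set (Set Ordinal))
    (hcnt : {E : Set Ordinal | IsThreadOf 𝒞 γ E}.Countable)
    (hne : {E : Set Ordinal | IsThreadOf 𝒞 γ E}.Nonempty) :
    ∃ α < γ, Order.IsSuccLimit α ∧ ∃ C ∈ 𝒞 α,
      ∃! E : Set Ordinal, IsThreadOf 𝒞 γ E ∧ E ∩ Set.Iio α = C := by
  have hγ₀ : ℵ₀ < γ.cof := aleph0_lt_aleph_one.trans hγ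
  obtain ⟨W, hWγ, hinj⟩ := exists_lt_forall_injOn_inter_Iio hγ₀ hcnt fun E hE => hE.1.1
  have hcof : ∀ E ∈ {E | IsThreadOf 𝒞 γ E}, ∀ δ < γ, ∃ β ∈ E, δ ≤ β ∧ β < γ := by
    intro E hE δ hδ
    obtain ⟨β, hβ, hδβ⟩ := hE.1.2.1 δ hδ
    exact ⟨β, hβ, hδβ, hE.1.1 hβ⟩
  obtain ⟨α, hαγ, hWα, hlim⟩ := exists_gt_forall_isLimitPt hγ₀ hcnt hcof hWγ
  obtain ⟨E₀, hE₀⟩ := hne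
  exact ⟨α, hαγ, (hlim E₀ hE₀).1, E₀ ∩ Iio α, hE₀.2 α hαγ (hlim E₀ hE₀), E₀, ⟨hE₀, rfl⟩,
    fun E hE => hinj α hWα hE.1 hE₀ hE.2⟩

/-- If `cof γ > ω₁` and a potential `□(γ, ω)`-sequence has a nonempty countable set of
threads, then some member `C` of some `𝒞 α` is extended by a unique thread. -/
theorem stmt13 (γ : Ordinal) (hγ : Cardinal.aleph 1 < γ.cof)
    (𝒞 : Ordinal → Set (Set Ordinal)) (h𝒞 : IsPotSeq 𝒞 γ Cardinal.aleph0)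
    (hcnt : {E : Set Ordinal | IsThreadOf 𝒞 γ E}.Countable)
    (hne : {E : Set Ordinal | IsThreadOf 𝒞 γ E}.Nonempty) :
    ∃ α < γ, Order.IsSuccLimit α ∧ ∃ C ∈ 𝒞 α,
      ∃! E : Set Ordinal, IsThreadOf 𝒞 γ E ∧ E ∩ Set.Iio α = C :=
  stmt13_general γ hγ 𝒞 hcnt hne
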